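/- Let T > 0, t ∈ [0,T), 0 < h ≤ k, α ∈ (0,1), and Ṽ(t,x) := Φ((h+k−x+(T−t))/√(T−t)) − Φ((k−x+(T−t))/√(T−t)) − Φ((h−x+(T−t))/√(T−t)) + Φ((−x+(T−t))/√(T−t)). Then |Ṽ(t,x)| ≤ h k^α / (√(2π e^α) (T−t)^{(1+α)/2}) for all x ∈ ℝ. -/

import Mathlib

open Real
open MeasureTheory intervalIntegral

noncomputable def stdGaussianPDF (x : ℝ) : ℝ := (Real.sqrt (2 * π))⁻¹ * Real.exp (-x ^ 2 / 2)

noncomputable def stdGaussianCDF (x : ℝ) : ℝ := ∫ u in Set.Iic x, stdGaussianPDF u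

lemma sqrt2pi_pos : 0 < Real.sqrt (2 * π) := Real.sqrt_pos.2 (by positivity)

lemma pdf_nonneg (x : ℝ) : 0 ≤ stdGaussianPDF x := by
  unfold stdGaussianPDF; positivity

lemma pdf_le (x : ℝ) : stdGaussianPDF x ≤ (Real.sqrt (2 * π))⁻¹ := by
  unfold stdGaussianPDF
  calc (Real.sqrt (2*π))⁻¹ * Real.exp (-x^2/2) ≤ (Real.sqrt (2*π))⁻¹ * 1 := by
        gcongr
        exact Real.exp_le_one_iff.2 (by nlinarith [sq_nonneg x])
    _ = _ := mul_one _

lemma pdf_continuous : Continuous stdGaussianPDF := by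
  unfold stdGaussianPDF
  fun_prop

lemma pdf_integrable : Integrable stdGaussianPDF := by
  have h : stdGaussianPDF = fun x => (Real.sqrt (2*π))⁻¹ * Real.exp (-(1/2) * x^2) := by
    funext x; unfold stdGaussianPDF; ring_nf
  rw [h]
  exact (integrable_exp_neg_mul_sq (by norm_num)).const_mul _

lemma pdf_hasDerivAt (x : ℝ) : HasDerivAt stdGaussianPDF (-x * stdGaussianPDF x) x := by
  have h1 : HasDerivAt (fun y : ℝ => -y^2/2) (-x) x := by
    have h := ((hasDerivAt_pow 2 x).neg.div_const 2)
    refine h.congr_deriv ?_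
    simp; ring
  have h2 := (h1.exp.const_mul ((Real.sqrt (2*π))⁻¹))
  refine h2.congr_deriv ?_
  unfold stdGaussianPDF; ring

lemma pdf_deriv_bound (x : ℝ) : |(-x * stdGaussianPDF x)| ≤ (Real.sqrt (2*π))⁻¹ * Real.exp (-(1:ℝ)/2) := by
  have hx : |x| ≤ Real.exp ((x^2-1)/2) :=  by
    nlinarith [Real.add_one_le_exp ((x^2-1)/2), sq_abs x, sq_nonneg (|x|-1)]
  have h1 : |(-x * stdGaussianPDF x)| = (Real.sqrt (2*π))⁻¹ * (|x| * Real.exp (-x^2/2)) := by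
    unfold stdGaussianPDF
    rw [abs_mul, abs_mul, abs_neg, abs_of_nonneg (inv_pos.2 sqrt2pi_pos).le,
      abs_of_nonneg (Real.exp_pos _).le]
    ring
  rw [h1]
  gcongr
  calc |x| * Real.exp (-x^2/2) ≤ Real.exp ((x^2-1)/2) * Real.exp (-x^2/2) := by
        gcongr
    _ = Real.exp (-(1:ℝ)/2) := by rw [← Real.exp_add]; ring_nf

lemma pdf_lip (a b : ℝ) :
    |stdGaussianPDF a - stdGaussianPDF b| ≤ (Real.sqrt (2*π))⁻¹ * Real.exp (-(1:ℝ)/2) * |a - b| := by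
  have hder : ∀ y ∈ Set.uIcc b a, HasDerivAt stdGaussianPDF (-y * stdGaussianPDF y) y :=
    fun y _ => pdf_hasDerivAt y
  have hcont : Continuous fun y : ℝ => -y * stdGaussianPDF y := continuous_id.neg.mul pdf_continuous
  have heq : stdGaussianPDF a - stdGaussianPDF b = ∫ y in b..a, (-y * stdGaussianPDF y) :=
    (integral_eq_sub_of_hasDerivAt hder (hcont.intervalIntegrable _ _)).symm
  rw [heq]
  have := intervalIntegral.norm_integral_le_of_norm_le_const
    (C := (Real.sqrt (2*π))⁻¹ * Real.exp (-(1:ℝ)/2))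
    (f := fun y : ℝ => -y * stdGaussianPDF y) (a := b) (b := a)
    (fun y _ => pdf_deriv_bound y)
  simpa [abs_sub_comm a b] using this


lemma sqrt_const_eq (α : ℝ) :
    (Real.sqrt (2 * π * Real.exp α))⁻¹ = (Real.sqrt (2*π))⁻¹ * Real.exp (-(1:ℝ)/2 * α) := by
  rw [Real.sqrt_mul (by positivity), mul_inv]
  congr 1
  rw [show Real.exp α = Real.exp (α/2) ^ 2 by rw [sq, ← Real.exp_add]; ring_nf,
    Real.sqrt_sq (Real.exp_pos _).le, ← Real.exp_neg]
  congr 1; ring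

lemma pdf_holder (a b α : ℝ) (hα : α ∈ Set.Ioo (0:ℝ) 1) :
    |stdGaussianPDF a - stdGaussianPDF b| ≤ |a - b| ^ α / Real.sqrt (2 * π * Real.exp α) := by
  set s : ℝ := (Real.sqrt (2*π))⁻¹ with hs
  have hspos : 0 < s := inv_pos.2 sqrt2pi_pos
  set Δ := |stdGaussianPDF a - stdGaussianPDF b| with hΔ
  have hΔ0 : 0 ≤ Δ := abs_nonneg _
  have hΔs : Δ ≤ s := by
    rw [hΔ, abs_sub_le_iff]
    constructor <;> nlinarith [pdf_le a, pdf_le b, pdf_nonneg a, pdf_nonneg b]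
  have hΔL : Δ ≤ s * Real.exp (-(1:ℝ)/2) * |a - b| := pdf_lip a b
  have key : Δ ≤ s ^ (1 - α) * (s * Real.exp (-(1:ℝ)/2) * |a - b|) ^ α := by
    calc Δ = Δ ^ ((1 - α) + α) := by rw [show (1-α)+α = (1:ℝ) by ring, Real.rpow_one]
      _ = Δ ^ (1-α) * Δ ^ α := Real.rpow_add' hΔ0 (by norm_num)
      _ ≤ s ^ (1-α) * (s * Real.exp (-(1:ℝ)/2) * |a - b|) ^ α :=
          mul_le_mul (Real.rpow_le_rpow hΔ0 hΔs (by linarith [hα.2]))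
            (Real.rpow_le_rpow hΔ0 hΔL hα.1.le) (Real.rpow_nonneg hΔ0 _)
            (Real.rpow_nonneg (by positivity) _)
  refine key.trans_eq ?_
  have hrhs : |a - b| ^ α / Real.sqrt (2 * π * Real.exp α)
      = |a - b| ^ α * (s * Real.exp (-(1:ℝ)/2 * α)) := by
    rw [div_eq_mul_inv, sqrt_const_eq]
  have h1 : (s * Real.exp (-(1:ℝ)/2) * |a-b|) ^ α
      = s ^ α * Real.exp (-(1:ℝ)/2*α) * |a-b| ^ α := by
    rw [Real.mul_rpow (by positivity) (abs_nonneg _),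
      Real.mul_rpow hspos.le (Real.exp_pos _).le, ← Real.exp_mul]
  have h2 : s ^ (1-α) * s ^ α = s := by
    rw [← Real.rpow_add hspos]; norm_num
  rw [hrhs, h1]
  linear_combination Real.exp (-(1:ℝ)/2 * α) * |a - b| ^ α * h2

lemma cdf_sub (p q : ℝ) : stdGaussianCDF p - stdGaussianCDF q = ∫ u in q..p, stdGaussianPDF u :=
  integral_Iic_sub_Iic pdf_integrable.integrableOn pdf_integrable.integrableOn

/-- Pointwise bound on the value function Ṽ. -/
theorem Vtilde_bound (T t h k α : ℝ) (hT : 0 < T) (ht : t ∈ Set.Ico 0 T)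
    (hh : 0 < h) (hk : h ≤ k) (hα : α ∈ Set.Ioo (0 : ℝ) 1) (x : ℝ) :
    |stdGaussianCDF ((h + k - x + (T - t)) / Real.sqrt (T - t))
      - stdGaussianCDF ((k - x + (T - t)) / Real.sqrt (T - t))
      - stdGaussianCDF ((h - x + (T - t)) / Real.sqrt (T - t))
      + stdGaussianCDF ((-x + (T - t)) / Real.sqrt (T - t))| ≤
    h * k ^ α / (Real.sqrt (2 * π * Real.exp α) * (T - t) ^ ((1 + α) / 2)) := by
  have hτ : 0 < T - t := sub_pos.2 ht.2
  set τ := T - t with hτdef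
  set σ := Real.sqrt τ with hσdef
  have hσ : 0 < σ := Real.sqrt_pos.2 hτ
  set c := h / σ with hc
  set d := k / σ with hd
  have hcpos : 0 < c := div_pos hh hσ
  have hdpos : 0 < d := div_pos (hh.trans_le hk) hσ
  set A := (-x + τ) / σ with hA
  have e1 : (h + k - x + τ)/σ = (A + d) + c := by rw [hA, hc, hd]; field_simp; ring
  have e2 : (k - x + τ)/σ = A + d := by rw [hA, hd]; field_simp; ring
  have e3 : (h - x + τ)/σ = A + c := by rw [hA, hc]; field_simp; ring
  rw [e1, e2, e3]
  have split : stdGaussianCDF ((A + d) + c) - stdGaussianCDF (A + d) - stdGaussianCDF (A + c)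
      + stdGaussianCDF A
      = (∫ u in (A+d)..((A+d)+c), stdGaussianPDF u) - ∫ u in A..(A+c), stdGaussianPDF u := by
    rw [← cdf_sub, ← cdf_sub]; ring
  have shift1 : (∫ u in (A+d)..((A+d)+c), stdGaussianPDF u)
      = ∫ u in (0:ℝ)..c, stdGaussianPDF (u + (A+d)) := by
    rw [intervalIntegral.integral_comp_add_right]
    norm_num [add_comm]
  have shift2 : (∫ u in A..(A+c), stdGaussianPDF u)
      = ∫ u in (0:ℝ)..c, stdGaussianPDF (u + A) := by
    rw [intervalIntegral.integral_comp_add_right]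
    norm_num [add_comm]
  have combine : (∫ u in (0:ℝ)..c, stdGaussianPDF (u + (A+d)))
      - (∫ u in (0:ℝ)..c, stdGaussianPDF (u + A))
      = ∫ u in (0:ℝ)..c, (stdGaussianPDF (u + (A+d)) - stdGaussianPDF (u + A)) := by
    rw [← intervalIntegral.integral_sub]
    · exact ((pdf_continuous.comp (continuous_id.add continuous_const)).intervalIntegrable _ _)
    · exact ((pdf_continuous.comp (continuous_id.add continuous_const)).intervalIntegrable _ _)
  rw [split, shift1, shift2, combine]
  have bound : ∀ u ∈ Set.uIoc (0:ℝ) c,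
      ‖stdGaussianPDF (u + (A+d)) - stdGaussianPDF (u + A)‖
        ≤ d ^ α / Real.sqrt (2 * π * Real.exp α) := by
    intro u _
    have := pdf_holder (u + (A+d)) (u + A) α hα
    have habs : |(u + (A+d)) - (u + A)| = d := by
      rw [show (u + (A+d)) - (u + A) = d by ring, abs_of_pos hdpos]
    rwa [habs] at this
  have main := intervalIntegral.norm_integral_le_of_norm_le_const bound
  rw [Real.norm_eq_abs] at main
  refine main.trans_eq ?_
  have hτσ : τ ^ ((1 + α)/2) = σ ^ ((1:ℝ) + α) := by
    rw [hσdef, Real.sqrt_eq_rpow, ← Real.rpow_mul hτ.le]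
    congr 1; ring
  have hσ1α : σ ^ ((1:ℝ) + α) = σ * σ ^ α := by
    rw [Real.rpow_add hσ, Real.rpow_one]
  have hdα : d ^ α = k ^ α / σ ^ α := Real.div_rpow (hh.le.trans hk) hσ.le α
  rw [hτσ, hσ1α, hdα, hc]
  have hσα : 0 < σ ^ α := Real.rpow_pos_of_pos hσ _
  have hS : 0 < Real.sqrt (2 * π * Real.exp α) := Real.sqrt_pos.2 (by positivity)
  rw [abs_of_pos (by simpa using div_pos hh hσ)]
  field_simp
  ring
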